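/- Let X be a real Hilbert space, let A, B : X ⇉ X be monotone set-valued operators with total resolvent selections J_A, J_B, and let T be the Douglas–Rachford operator of (A,B). Then {w ∈ X : ∃ x ∈ X with w ∈ A(x − w) + B x} = {y − T y : y ∈ X}; that is, the set of perturbations w for which the w-perturbed problem has a solution equals the range of Id − T. -/
import Mathlib


open Pointwise
open scoped RealInnerProductSpace

lemma res_unique' {X : Type*} [NormedAddCommGroup X] [InnerProductSpace ℝ X]
    (A : X → Set X)
    (hA : ∀ x y x' y' : X, x' ∈ A x → y' ∈ A y → 0 ≤ ⟪x - y, x' - y'⟫)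
    (JA : X → X) (hJA : ∀ x : X, x - JA x ∈ A (JA x))
    {z u : X} (hu : z - u ∈ A u) : JA z = u := by
  have h := hA (JA z) u (z - JA z) (z - u) (hJA z) hu
  have he : (z - JA z) - (z - u) = -(JA z - u) := by abel
  rw [he, inner_neg_right, real_inner_self_eq_norm_sq] at h
  have : ‖JA z - u‖ = 0 := by nlinarith [norm_nonneg (JA z - u)]
  exact sub_eq_zero.mp (norm_eq_zero.mp this)

/-- The set of perturbations `w` for which the `w`-perturbed problem
has a solution equals the range of `Id - T`, where `T` is the Douglas–Rachford operator
of `(A,B)`. -/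
theorem stmt11 {X : Type*} [NormedAddCommGroup X] [InnerProductSpace ℝ X] [CompleteSpace X]
    (A B : X → Set X)
    (hA : ∀ x y x' y' : X, x' ∈ A x → y' ∈ A y → 0 ≤ ⟪x - y, x' - y'⟫)
    (hB : ∀ x y x' y' : X, x' ∈ B x → y' ∈ B y → 0 ≤ ⟪x - y, x' - y'⟫)
    (JA JB : X → X)
    (hJA : ∀ x : X, x - JA x ∈ A (JA x)) (hJB : ∀ x : X, x - JB x ∈ B (JB x))
    (T : X → X) (hT : ∀ x : X, T x = JA (2 • JB x - x) + x - JB x) :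
    {w : X | ∃ x : X, w ∈ A (x - w) + B x} = {u : X | ∃ y : X, u = y - T y} := by
  ext w
  simp only [Set.mem_setOf_eq]
  constructor
  · rintro ⟨x, hw⟩
    rw [Set.mem_add] at hw
    obtain ⟨a, ha, b, hb, hab⟩ := hw
    refine ⟨x + b, ?_⟩
    have hJBy : JB (x + b) = x :=
      res_unique' B hB JB hJB (by simpa using hb)
    have hJAz : JA (2 • JB (x + b) - (x + b)) = x - w := by
      apply res_unique' A hA JA hJA
      rw [hJBy]
      have : 2 • x - (x + b) - (x - w) = a := by
        rw [two_smul]; rw [← hab]; abel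
      rw [this]; exact ha
    rw [hT, hJAz, hJBy]
    abel
  · rintro ⟨y, rfl⟩
    refine ⟨JB y, ?_⟩
    rw [Set.mem_add]
    set z := 2 • JB y - y with hz
    refine ⟨z - JA z, ?_, y - JB y, hJB y, ?_⟩
    · have : JB y - (y - T y) = JA z := by rw [hT]; abel
      rw [this]; exact hJA z
    · rw [hT, hz]; rw [two_smul]; abel
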